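/- arXiv:2411.01131 — 5 statements merged into one kernel-verified Lean document; each statement's English description precedes it below -/
import Mathlib

section
/- Let n, χ ∈ ℕ, let a, Δx ∈ ℝ, set x_κ = a + κ·Δx for κ ∈ {0, …, 2ⁿ−1}, and let α₀, …, α_χ ∈ ℂ. Define the vector ψ ∈ ℂ^{2ⁿ} by ψ_κ = ∑_{q=0}^{χ} α_q · x_κ^q. Then for every index i ∈ {0, …, 2ⁿ−1} whose Hamming weight satisfies |i|_b > χ, the Walsh–Hadamard coefficient β_i = 2^{−n/2} · ∑_{κ=0}^{2ⁿ−1} ψ_κ · (−1)^{∑_{m=0}^{n−1} κ_m i_m} is zero. Equivalently, the vector H^{⊗n} ψ is supported only on computational basis indices of Hamming weight at most χ. -/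
/-!
Split the sum over `κ < 2 ^ (n + 1)` along the top binary digit: the Walsh coefficient of `p` on
`n + 1` digits becomes the one of `κ ↦ p κ ± p (κ + 2 ^ n)` on `n` digits, with sign `-` exactly
when that digit of `i` is one. A finite difference lowers the degree of a polynomial by one and a
sum does not raise it, so each one-digit of `i` costs a degree, and a polynomial of degree less
than the Hamming weight of `i` has vanishing coefficient.
-/

open Finset Polynomial

def lowBitWeight (n i : ℕ) : ℕ :=
  ∑ m ∈ range n, if Nat.testBit i m then 1 else 0

def commonLowBits (n κ i : ℕ) : ℕ :=
  ∑ m ∈ range n, if Nat.testBit κ m ∧ Nat.testBit i m then 1 else 0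

lemma lowBitWeight_succ (n i : ℕ) :
    lowBitWeight (n + 1) i = lowBitWeight n i + if Nat.testBit i n then 1 else 0 :=
  sum_range_succ _ _

lemma commonLowBits_succ_of_lt {n κ : ℕ} (hκ : κ < 2 ^ n) (i : ℕ) :
    commonLowBits (n + 1) κ i = commonLowBits n κ i := by
  rw [commonLowBits, sum_range_succ, Nat.testBit_eq_false_of_lt hκ]
  simp [commonLowBits]

lemma commonLowBits_succ_two_pow_add {n κ : ℕ} (hκ : κ < 2 ^ n) (i : ℕ) :
    commonLowBits (n + 1) (2 ^ n + κ) i =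
      commonLowBits n κ i + if Nat.testBit i n then 1 else 0 := by
  rw [commonLowBits, sum_range_succ, Nat.testBit_two_pow_add_eq, Nat.testBit_eq_false_of_lt hκ]
  congr 1
  · exact sum_congr rfl fun m hm ↦ by rw [Nat.testBit_two_pow_add_gt (mem_range.mp hm)]
  · simp

section CommRing

variable {R : Type*} [CommRing R]

/-- The Walsh–Hadamard coefficient `β_i` of `f` without the normalising factor `2^(-n/2)`. -/
def walshSum (n i : ℕ) (f : ℕ → R) : R :=
  ∑ κ ∈ range (2 ^ n), f κ * (-1) ^ commonLowBits n κ i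

lemma walshSum_succ (n i : ℕ) (f : ℕ → R) :
    walshSum (n + 1) i f = walshSum n i fun κ ↦
      f κ + (-1) ^ (if Nat.testBit i n then 1 else 0) * f (2 ^ n + κ) := by
  rw [walshSum, pow_succ, mul_two, sum_range_add, ← sum_add_distrib, walshSum]
  refine sum_congr rfl fun κ hκ ↦ ?_
  rw [commonLowBits_succ_of_lt (mem_range.mp hκ), commonLowBits_succ_two_pow_add (mem_range.mp hκ),
    pow_add]
  ring

lemma Polynomial.degree_sub_taylor_lt {p : R[X]} (hp : p ≠ 0) (r : R) :
    (p - taylor r p).degree < p.degree :=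
  degree_sub_lt_left (degree_taylor p r).symm hp (leadingCoeff_taylor ..).symm

theorem walshSum_eval_eq_zero_of_degree_lt (n i : ℕ) (p : R[X])
    (hp : p.degree < lowBitWeight n i) : walshSum n i (fun κ ↦ p.eval (κ : R)) = 0 := by
  induction n generalizing p with
  | zero =>
    rw [lowBitWeight, range_zero, sum_empty, Nat.cast_zero, Nat.WithBot.lt_zero_iff,
      degree_eq_bot] at hp
    simp [walshSum, hp]
  | succ n ih =>
    have hshift (κ : ℕ) : p.eval ((2 ^ n + κ : ℕ) : R) = (taylor (2 ^ n : R) p).eval (κ : R) := by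
      rw [taylor_eval, Nat.cast_add, add_comm]; norm_cast
    rw [walshSum_succ]
    simp only [hshift]
    by_cases hb : Nat.testBit i n
    · rw [lowBitWeight_succ, if_pos hb] at hp
      have hdeg : (p - taylor (2 ^ n : R) p).degree < lowBitWeight n i := by
        rcases eq_or_ne p 0 with rfl | hp0
        · simp
        · exact (degree_sub_taylor_lt hp0 _).trans_le (Order.le_of_lt_succ (by exact_mod_cast hp))
      simpa [hb, sub_eq_add_neg] using ih _ hdeg
    · rw [lowBitWeight_succ, if_neg hb, add_zero] at hp
      have hdeg : (p + taylor (2 ^ n : R) p).degree < lowBitWeight n i :=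
        (degree_add_le _ _).trans_lt (max_lt hp ((degree_taylor p _).trans_lt hp))
      simpa [hb] using ih _ hdeg

end CommRing

lemma Polynomial.natDegree_sum_C_mul_pow_le {R : Type*} [Semiring R] (c : ℕ → R) {ℓ : R[X]}
    (hℓ : ℓ.natDegree ≤ 1) (d : ℕ) : (∑ q ∈ range (d + 1), C (c q) * ℓ ^ q).natDegree ≤ d :=
  natDegree_sum_le_of_forall_le _ _ fun q hq ↦ (natDegree_C_mul_le _ _).trans <|
    (natDegree_pow_le_of_le q hℓ).trans <| by rw [mul_one]; exact Nat.lt_succ_iff.mp (mem_range.mp hq)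

open Finset in
/-- If the amplitudes `ψ_κ = ∑_{q=0}^{χ} α_q x_κ^q` (with
`x_κ = a + κ·Δx`) form a polynomial of degree at most `χ` in `κ`, then every
Walsh–Hadamard coefficient `β_i` with Hamming weight `|i|_b > χ` vanishes. -/
theorem walsh_hadamard_of_polynomial_amplitudes (n χ : ℕ) (a Δx : ℝ) (α : ℕ → ℂ)
    (ψ : Fin (2 ^ n) → ℂ)
    (hψ : ∀ κ : Fin (2 ^ n),
      ψ κ = ∑ q ∈ Finset.range (χ + 1), α q * ((a + (κ : ℕ) * Δx : ℝ) : ℂ) ^ q)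
    (i : Fin (2 ^ n))
    (hi : χ < ∑ m ∈ Finset.range n, (if Nat.testBit (i : ℕ) m then 1 else 0)) :
    ((Real.sqrt (2 ^ n) : ℂ))⁻¹ *
      ∑ κ : Fin (2 ^ n), ψ κ *
        (-1 : ℂ) ^ (∑ m ∈ Finset.range n,
          (if Nat.testBit (κ : ℕ) m ∧ Nat.testBit (i : ℕ) m then 1 else 0)) = 0 := by
  set P : ℂ[X] := ∑ q ∈ range (χ + 1), C (α q) * (C (Δx : ℂ) * X + C (a : ℂ)) ^ q
  have hψP (κ : Fin (2 ^ n)) : ψ κ = P.eval ((κ : ℕ) : ℂ) := by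
    simp only [hψ, P, eval_finsetSum, eval_mul, eval_pow, eval_add, eval_C, eval_X]
    push_cast
    exact sum_congr rfl fun q _ ↦ by ring
  have hP : P.degree < lowBitWeight n i :=
    degree_le_natDegree.trans_lt <| by
      exact_mod_cast (natDegree_sum_C_mul_pow_le α natDegree_linear_le χ).trans_lt hi
  have hsum := walshSum_eval_eq_zero_of_degree_lt n i P hP
  rw [walshSum, ← Fin.sum_univ_eq_sum_range] at hsum
  simp only [hψP, commonLowBits] at hsum ⊢
  rw [hsum, mul_zero]
end

section
/- Let n, q ∈ ℕ and let i ∈ {0, …, 2ⁿ−1} be an index whose Hamming weight satisfies |i|_b > q. Then ∑_{κ=0}^{2ⁿ−1} κ^q · (−1)^{∑_{m=0}^{n−1} κ_m i_m} = 0. -/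
open Finset Polynomial

lemma aux_signed (n : ℕ) : ∀ (P : Polynomial ℤ) (i : ℕ),
    (P.degree < (((∑ m ∈ Finset.range n, (if Nat.testBit i m then 1 else 0) : ℕ) : WithBot ℕ))) →
    ∑ κ ∈ Finset.range (2 ^ n), P.eval (κ : ℤ) *
      (-1 : ℤ) ^ (∑ m ∈ Finset.range n,
        (if Nat.testBit κ m ∧ Nat.testBit i m then 1 else 0)) = 0 := by
  induction n with
  | zero =>
    intro P i hd
    simp only [Finset.range_zero, Finset.sum_empty, Nat.cast_zero] at hd
    have hP : P = 0 := Polynomial.degree_eq_bot.mp (Nat.WithBot.lt_zero_iff.mp hd)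
    simp [hP]
  | succ n ih =>
    intro P i hd
    rcases eq_or_ne P 0 with rfl | hP0
    · simp
    set w : ℕ := ∑ m ∈ Finset.range n, (if Nat.testBit i m then 1 else 0) with hw
    -- split the sum
    have hsplit : (2 : ℕ) ^ (n + 1) = 2 ^ n + 2 ^ n := by ring
    rw [hsplit, Finset.sum_range_add]
    -- exponent for low part
    have hexp1 : ∀ κ ∈ Finset.range (2 ^ n),
        (∑ m ∈ Finset.range (n + 1), (if Nat.testBit κ m ∧ Nat.testBit i m then 1 else 0)) =
        ∑ m ∈ Finset.range n, (if Nat.testBit κ m ∧ Nat.testBit i m then 1 else 0) := by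
      intro κ hκ
      rw [Finset.sum_range_succ, Nat.testBit_lt_two_pow (Finset.mem_range.mp hκ)]
      simp
    -- exponent for high part
    have hexp2 : ∀ κ ∈ Finset.range (2 ^ n),
        (∑ m ∈ Finset.range (n + 1),
          (if Nat.testBit (2 ^ n + κ) m ∧ Nat.testBit i m then 1 else 0)) =
        (∑ m ∈ Finset.range n, (if Nat.testBit κ m ∧ Nat.testBit i m then 1 else 0)) +
          (if Nat.testBit i n then 1 else 0) := by
      intro κ hκ
      rw [Finset.sum_range_succ]
      congr 1
      · refine Finset.sum_congr rfl fun m hm => ?_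
        rw [Nat.testBit_two_pow_add_gt (Finset.mem_range.mp hm)]
      · rw [Nat.testBit_two_pow_add_eq, Nat.testBit_lt_two_pow (Finset.mem_range.mp hκ)]
        simp
    have hcomp_lc : (P.comp (X + C ((2:ℤ) ^ n))).leadingCoeff = P.leadingCoeff := by
      rw [Polynomial.leadingCoeff_comp (by rw [Polynomial.natDegree_X_add_C]; exact one_ne_zero),
        Polynomial.leadingCoeff_X_add_C, one_pow, mul_one]
    have hcomp_ne : P.comp (X + C ((2:ℤ) ^ n)) ≠ 0 := fun h => hP0 (by
      have := hcomp_lc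
      rw [h] at this
      exact Polynomial.leadingCoeff_eq_zero.mp this.symm)
    have hcomp_deg : (P.comp (X + C ((2:ℤ) ^ n))).degree = P.degree := by
      rw [Polynomial.degree_eq_natDegree hcomp_ne, Polynomial.degree_eq_natDegree hP0,
        Polynomial.natDegree_comp, Polynomial.natDegree_X_add_C, mul_one]
    have heval : ∀ κ : ℕ, (P.comp (X + C ((2:ℤ) ^ n))).eval (κ : ℤ) =
        P.eval (((2 ^ n + κ : ℕ) : ℤ)) := by
      intro κ
      rw [Polynomial.eval_comp]
      simp only [Polynomial.eval_add, Polynomial.eval_X, Polynomial.eval_C]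
      congr 1
      push_cast
      ring
    by_cases hin : Nat.testBit i n
    · -- weight drops by one
      have hwsum : (∑ m ∈ Finset.range (n + 1), (if Nat.testBit i m then 1 else 0)) = w + 1 := by
        rw [Finset.sum_range_succ, hin]
        simp [hw]
      rw [hwsum] at hd
      set Q : Polynomial ℤ := P - P.comp (X + C ((2:ℤ) ^ n)) with hQ
      have hQdeg : Q.degree < (w : WithBot ℕ) := by
        have h1 : Q.degree < P.degree :=
          Polynomial.degree_sub_lt hcomp_deg.symm hP0 hcomp_lc.symm
        have h2 : P.degree ≤ (w : WithBot ℕ) := by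
          rw [← Polynomial.natDegree_le_iff_degree_le]
          have := (Polynomial.natDegree_lt_iff_degree_lt hP0).mpr hd
          omega
        exact lt_of_lt_of_le h1 h2
      have := ih Q i hQdeg
      simp only [hQ, Polynomial.eval_sub, sub_mul, Finset.sum_sub_distrib] at this
      have key : ∑ κ ∈ Finset.range (2 ^ n), P.eval ((2 ^ n + κ : ℕ) : ℤ) *
          (-1 : ℤ) ^ (∑ m ∈ Finset.range (n + 1),
            (if Nat.testBit (2 ^ n + κ) m ∧ Nat.testBit i m then 1 else 0)) =
          -∑ κ ∈ Finset.range (2 ^ n), (P.comp (X + C ((2:ℤ) ^ n))).eval (κ : ℤ) *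
            (-1 : ℤ) ^ (∑ m ∈ Finset.range n,
              (if Nat.testBit κ m ∧ Nat.testBit i m then 1 else 0)) := by
        rw [← Finset.sum_neg_distrib]
        refine Finset.sum_congr rfl fun κ hκ => ?_
        rw [hexp2 κ hκ, hin, ← heval κ, pow_add]
        norm_num
      calc ∑ κ ∈ Finset.range (2 ^ n), P.eval (κ : ℤ) *
              (-1 : ℤ) ^ (∑ m ∈ Finset.range (n + 1),
                (if Nat.testBit κ m ∧ Nat.testBit i m then 1 else 0)) +
            ∑ κ ∈ Finset.range (2 ^ n), P.eval ((2 ^ n + κ : ℕ) : ℤ) *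
              (-1 : ℤ) ^ (∑ m ∈ Finset.range (n + 1),
                (if Nat.testBit (2 ^ n + κ) m ∧ Nat.testBit i m then 1 else 0))
          = ∑ κ ∈ Finset.range (2 ^ n), P.eval (κ : ℤ) *
              (-1 : ℤ) ^ (∑ m ∈ Finset.range n,
                (if Nat.testBit κ m ∧ Nat.testBit i m then 1 else 0)) -
            ∑ κ ∈ Finset.range (2 ^ n), (P.comp (X + C ((2:ℤ) ^ n))).eval (κ : ℤ) *
              (-1 : ℤ) ^ (∑ m ∈ Finset.range n,
                (if Nat.testBit κ m ∧ Nat.testBit i m then 1 else 0)) := by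
            rw [key]
            rw [Finset.sum_congr rfl fun κ hκ => by rw [hexp1 κ hκ]]
            ring
        _ = 0 := this
    · -- weight unchanged
      have hwsum : (∑ m ∈ Finset.range (n + 1), (if Nat.testBit i m then 1 else 0)) = w := by
        rw [Finset.sum_range_succ, if_neg hin, add_zero]
      rw [hwsum] at hd
      set Q : Polynomial ℤ := P + P.comp (X + C ((2:ℤ) ^ n)) with hQ
      have hQdeg : Q.degree < (w : WithBot ℕ) := by
        calc Q.degree ≤ max P.degree (P.comp (X + C ((2:ℤ) ^ n))).degree :=
              Polynomial.degree_add_le _ _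
          _ = P.degree := by rw [hcomp_deg, max_self]
          _ < (w : WithBot ℕ) := hd
      have := ih Q i hQdeg
      simp only [hQ, Polynomial.eval_add, add_mul, Finset.sum_add_distrib] at this
      calc ∑ κ ∈ Finset.range (2 ^ n), P.eval (κ : ℤ) *
              (-1 : ℤ) ^ (∑ m ∈ Finset.range (n + 1),
                (if Nat.testBit κ m ∧ Nat.testBit i m then 1 else 0)) +
            ∑ κ ∈ Finset.range (2 ^ n), P.eval ((2 ^ n + κ : ℕ) : ℤ) *
              (-1 : ℤ) ^ (∑ m ∈ Finset.range (n + 1),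
                (if Nat.testBit (2 ^ n + κ) m ∧ Nat.testBit i m then 1 else 0))
          = ∑ κ ∈ Finset.range (2 ^ n), P.eval (κ : ℤ) *
              (-1 : ℤ) ^ (∑ m ∈ Finset.range n,
                (if Nat.testBit κ m ∧ Nat.testBit i m then 1 else 0)) +
            ∑ κ ∈ Finset.range (2 ^ n), (P.comp (X + C ((2:ℤ) ^ n))).eval (κ : ℤ) *
              (-1 : ℤ) ^ (∑ m ∈ Finset.range n,
                (if Nat.testBit κ m ∧ Nat.testBit i m then 1 else 0)) := by
            congr 1
            · exact Finset.sum_congr rfl fun κ hκ => by rw [hexp1 κ hκ]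
            · refine Finset.sum_congr rfl fun κ hκ => ?_
              rw [hexp2 κ hκ, if_neg hin, add_zero, ← heval κ]
        _ = 0 := this

open Finset in
/-- For an index `i < 2^n` of Hamming weight greater than `q`,
the signed power sum `∑_{κ=0}^{2ⁿ−1} κ^q (−1)^{∑_m κ_m i_m}` vanishes. -/
theorem signed_power_sum_eq_zero (n q : ℕ) (i : Fin (2 ^ n))
    (hi : q < ∑ m ∈ Finset.range n, (if Nat.testBit (i : ℕ) m then 1 else 0)) :
    ∑ κ : Fin (2 ^ n), ((κ : ℕ) : ℤ) ^ q *
      (-1 : ℤ) ^ (∑ m ∈ Finset.range n,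
        (if Nat.testBit (κ : ℕ) m ∧ Nat.testBit (i : ℕ) m then 1 else 0)) = 0 := by
  have h := aux_signed n (Polynomial.X ^ q) (i : ℕ) (by
    rw [Polynomial.degree_X_pow]
    exact_mod_cast hi)
  rw [Fin.sum_univ_eq_sum_range (fun κ => ((κ : ℕ) : ℤ) ^ q *
    (-1 : ℤ) ^ (∑ m ∈ Finset.range n,
      (if Nat.testBit κ m ∧ Nat.testBit (i : ℕ) m then 1 else 0)))]
  simpa using h
end

section
/- Let h ≥ 1, let U_S be a unitary 2^h × 2^h complex matrix, and let ψ ∈ ℂ^{2^h} be its first column, ψ = U_S e₀. For p ∈ {0,1}, define on the space ℂ^{2^h} ⊗ ℂ² ⊗ ℂ^{2^h} the operators: H̃ = I ⊗ H ⊗ I with H = (1/√2)[[1,1],[1,−1]]; S̃ = I ⊗ S ⊗ I with S = diag(1, i); Z̃ = I ⊗ Z ⊗ I with Z = diag(1, −1); R = (I_{2^{h+1}} − 2·Π₀) ⊗ I_{2^h}, where Π₀ is the rank-one projector onto e₀ ⊗ e₀ in ℂ^{2^h} ⊗ ℂ²; U_C^S = (U_S ⊗ |0⟩⟨0| + I ⊗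 |1⟩⟨1|) ⊗ I_{2^h}, where |0⟩⟨0|, |1⟩⟨1| are the projectors onto e₀, e₁ of the middle qubit; U_Copy the unitary determined by U_Copy(e_j ⊗ e₀ ⊗ e_k) = e_j ⊗ e₀ ⊗ e_k and U_Copy(e_j ⊗ e₁ ⊗ e_k) = e_{j⊕k} ⊗ e₁ ⊗ e_k, where j⊕k denotes bitwise XOR of h-bit strings; W_p = H̃ · S̃^p · U_Copy · U_C^S · H̃; and G_p = W_p · R · W_p† · Z̃. Then for every k ∈ {0, …, 2^h−1}, the vector e₀ ⊗ e₀ ⊗ e_k is an eigenvector of −(1/2)·W_p†·(G_p + G_p†)·W_p with eigenvalue Re((−i)^p · ψ_k); that is, the eigenvalue is Re(ψ_k) when p = 0 and Im(ψ_k) when p = 1. -/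
/-!
Each factor of `W_p` is unitary (`H̃` and `S̃` are Kronecker products of unitaries, `U ↦ U_C^S`
is multiplicative and commutes with `†`, and `U_Copy` is a Hermitian involution), so with
`M = W_p† Z̃ W_p` one gets `W_p† (G_p + G_p†) W_p = R M + M R`. Since `R e = -e` for
`e = e₀ ⊗ e₀ ⊗ e_k`, this gives `-(1/2) (R M + M R) e = (Π₀ ⊗ I) M e`, whose coefficients are
`⟨W_p e_l, Z̃ W_p e_k⟩`. Finally `W_p e_k = ½ [(ψ + iᵖ e_k) ⊗ e₀ + (ψ - iᵖ e_k) ⊗ e₁] ⊗ e_k`,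
so the coefficient vanishes for `l ≠ k`, and for `l = k` it is
`¼ (‖ψ + iᵖ e_k‖² - ‖ψ - iᵖ e_k‖²) = Re((-i)ᵖ ψ_k)` by polarization.
-/

namespace DiagBlockEncoding

open Matrix

/-- The index type of the space `ℂ^{2^h} ⊗ ℂ² ⊗ ℂ^{2^h}`. -/
abbrev Ix (h : ℕ) := Fin (2 ^ h) × Fin 2 × Fin (2 ^ h)

/-- The Hadamard gate `H = (1/√2)[[1,1],[1,−1]]`. -/
noncomputable def Hgate : Matrix (Fin 2) (Fin 2) ℂ :=
  (Real.sqrt 2 : ℂ)⁻¹ • !![1, 1; 1, -1]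

/-- The phase gate `S = diag(1, i)`. -/
def Sgate : Matrix (Fin 2) (Fin 2) ℂ := !![1, 0; 0, Complex.I]

/-- The gate `Z = diag(1, −1)`. -/
def Zgate : Matrix (Fin 2) (Fin 2) ℂ := !![1, 0; 0, -1]

/-- `H̃ = I ⊗ H ⊗ I`. -/
noncomputable def Htil (h : ℕ) : Matrix (Ix h) (Ix h) ℂ :=
  Matrix.of fun x y =>
    if x.1 = y.1 ∧ x.2.2 = y.2.2 then Hgate x.2.1 y.2.1 else 0

/-- `S̃ = I ⊗ S ⊗ I`. -/
def Stil (h : ℕ) : Matrix (Ix h) (Ix h) ℂ :=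
  Matrix.of fun x y =>
    if x.1 = y.1 ∧ x.2.2 = y.2.2 then Sgate x.2.1 y.2.1 else 0

/-- `Z̃ = I ⊗ Z ⊗ I`. -/
def Ztil (h : ℕ) : Matrix (Ix h) (Ix h) ℂ :=
  Matrix.of fun x y =>
    if x.1 = y.1 ∧ x.2.2 = y.2.2 then Zgate x.2.1 y.2.1 else 0

/-- `R = (I − 2·Π₀) ⊗ I`, where `Π₀` projects onto `e₀ ⊗ e₀` of the first two
registers. -/
def Rop (h : ℕ) : Matrix (Ix h) (Ix h) ℂ :=
  Matrix.of fun x y =>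
    if x.2.2 = y.2.2 then
      (if x.1 = y.1 ∧ x.2.1 = y.2.1 then 1 else 0) -
        2 * (if x.1 = 0 ∧ x.2.1 = 0 ∧ y.1 = 0 ∧ y.2.1 = 0 then 1 else 0)
    else 0

/-- `U_C^S = (U_S ⊗ |0⟩⟨0| + I ⊗ |1⟩⟨1|) ⊗ I`: apply `U_S` to the first
register controlled on the middle qubit being `|0⟩`. -/
def UCS (h : ℕ) (U : Matrix (Fin (2 ^ h)) (Fin (2 ^ h)) ℂ) :
    Matrix (Ix h) (Ix h) ℂ :=
  Matrix.of fun x y =>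
    if x.2.2 = y.2.2 then
      (if x.2.1 = 0 ∧ y.2.1 = 0 then U x.1 y.1 else 0) +
        (if x.1 = y.1 ∧ x.2.1 = 1 ∧ y.2.1 = 1 then 1 else 0)
    else 0

/-- `U_Copy`: controlled on the middle qubit being `|1⟩`, XOR the last register
into the first one: `e_j ⊗ e₁ ⊗ e_k ↦ e_{j⊕k} ⊗ e₁ ⊗ e_k`. -/
def UCopy (h : ℕ) : Matrix (Ix h) (Ix h) ℂ :=
  Matrix.of fun x y =>
    if x.2.1 = y.2.1 ∧ x.2.2 = y.2.2 ∧
        (x.1 : ℕ) = (if y.2.1 = 1 then (y.1 : ℕ) ^^^ (y.2.2 : ℕ) else (y.1 : ℕ))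
    then 1 else 0

/-- `W_p = H̃ · S̃^p · U_Copy · U_C^S · H̃`. -/
noncomputable def Wop (h : ℕ) (U : Matrix (Fin (2 ^ h)) (Fin (2 ^ h)) ℂ)
    (p : ℕ) : Matrix (Ix h) (Ix h) ℂ :=
  Htil h * (Stil h) ^ p * UCopy h * UCS h U * Htil h

/-- `G_p = W_p · R · W_p† · Z̃`. -/
noncomputable def Gop (h : ℕ) (U : Matrix (Fin (2 ^ h)) (Fin (2 ^ h)) ℂ)
    (p : ℕ) : Matrix (Ix h) (Ix h) ℂ :=
  Wop h U p * Rop h * (Wop h U p)ᴴ * Ztil h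

/-- The basis vector `e₀ ⊗ e₀ ⊗ e_k` of `ℂ^{2^h} ⊗ ℂ² ⊗ ℂ^{2^h}`. -/
def eVec (h : ℕ) (k : Fin (2 ^ h)) : Ix h → ℂ :=
  fun x => if x = (0, 0, k) then 1 else 0

open scoped Kronecker

theorem star_mul_add_star_mul_eq_anticomm {A : Type*} [Semiring A] [StarRing A]
    {W R Z : A} (hW : star W * W = 1) (hR : IsSelfAdjoint R) (hZ : IsSelfAdjoint Z) :
    star W * (W * R * star W * Z + star (W * R * star W * Z)) * W =
      R * (star W * Z * W) + star W * Z * W * R := by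
  have hstar : star (W * R * star W * Z) = Z * W * R * star W := by
    simp only [star_mul, star_star, hR.star_eq, hZ.star_eq, mul_assoc]
  rw [hstar, mul_add, add_mul]
  congr 1
  · calc star W * (W * R * star W * Z) * W = star W * W * R * (star W * Z * W) := by
          simp only [mul_assoc]
      _ = R * (star W * Z * W) := by rw [hW, one_mul]
  · calc star W * (Z * W * R * star W) * W = star W * Z * W * R * (star W * W) := by
          simp only [mul_assoc]
      _ = star W * Z * W * R := by rw [hW, mul_one]

theorem of_middle_eq_kronecker {α l m n : Type*} [MulZeroOneClass α]
    [DecidableEq l] [DecidableEq n] (A : Matrix m m α) :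
    (Matrix.of fun (x y : l × m × n) =>
        if x.1 = y.1 ∧ x.2.2 = y.2.2 then A x.2.1 y.2.1 else 0) =
      1 ⊗ₖ (A ⊗ₖ 1) := by
  ext ⟨a, b, c⟩ ⟨a', b', c'⟩
  by_cases ha : a = a' <;> by_cases hc : c = c' <;> simp [ha, hc, one_apply]

theorem conjTranspose_mulVec_apply {m n α : Type*} [Fintype m] [NonUnitalSemiring α] [StarRing α]
    (A : Matrix m n α) (v : m → α) (j : n) : (Aᴴ *ᵥ v) j = star (A.col j) ⬝ᵥ v :=
  rfl

theorem polarization_re_star_dotProduct {n : Type*} [Fintype n] (a b : n → ℂ) :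
    star ((2⁻¹ : ℂ) • (a + b)) ⬝ᵥ ((2⁻¹ : ℂ) • (a + b)) -
        star ((2⁻¹ : ℂ) • (a - b)) ⬝ᵥ ((2⁻¹ : ℂ) • (a - b)) =
      ((star b ⬝ᵥ a).re : ℂ) := by
  have hconj : star a ⬝ᵥ b = starRingEnd ℂ (star b ⬝ᵥ a) := by
    rw [← Complex.star_def, ← star_dotProduct_star, star_star]
  have hre := Complex.add_conj (star b ⬝ᵥ a)
  simp only [star_smul, star_add, star_sub, smul_dotProduct, dotProduct_smul, add_dotProduct,
    dotProduct_add, sub_dotProduct, dotProduct_sub, hconj, smul_eq_mul, star_inv₀, star_ofNat]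
  push_cast at hre
  linear_combination (2⁻¹ : ℂ) * hre

section

variable {h : ℕ}

theorem val_xor_of_two_pow (a b : Fin (2 ^ h)) : ((a ^^^ b : Fin (2 ^ h)) : ℕ) = a ^^^ b := by
  rw [Fin.xor_val, Nat.mod_eq_of_lt (Nat.xor_lt_two_pow a.2 b.2)]

theorem xor_xor_cancel_right (a b : Fin (2 ^ h)) : a ^^^ b ^^^ b = a :=
  Fin.ext (by rw [val_xor_of_two_pow, val_xor_of_two_pow, Nat.xor_assoc, Nat.xor_self,
    Nat.xor_zero])

theorem eq_xor_comm {a b c : Fin (2 ^ h)} : a = b ^^^ c ↔ b = a ^^^ c := by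
  constructor <;> rintro rfl <;> rw [xor_xor_cancel_right]

theorem val_eq_val_xor_iff {a b c : Fin (2 ^ h)} :
    (a : ℕ) = (b : ℕ) ^^^ (c : ℕ) ↔ b = a ^^^ c := by
  rw [← val_xor_of_two_pow, Fin.val_inj, eq_xor_comm]

theorem inv_sqrt_two_mul_self : (Real.sqrt 2 : ℂ)⁻¹ * (Real.sqrt 2 : ℂ)⁻¹ = 2⁻¹ := by
  rw [← mul_inv, ← Complex.ofReal_mul, Real.mul_self_sqrt zero_le_two, Complex.ofReal_ofNat]

theorem Hgate_mem_unitary : Hgate ∈ unitary (Matrix (Fin 2) (Fin 2) ℂ) := by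
  rw [mem_unitaryGroup_iff']
  ext i j
  fin_cases i <;> fin_cases j <;>
    norm_num [Hgate, star_eq_conjTranspose, mul_apply, Fin.sum_univ_two, inv_sqrt_two_mul_self]

theorem Sgate_mem_unitary : Sgate ∈ unitary (Matrix (Fin 2) (Fin 2) ℂ) := by
  rw [mem_unitaryGroup_iff']
  ext i j
  fin_cases i <;> fin_cases j <;> simp [Sgate, star_eq_conjTranspose, mul_apply, Fin.sum_univ_two]

theorem Zgate_isHermitian : Zgate.IsHermitian := by
  ext i j
  fin_cases i <;> fin_cases j <;> simp [Zgate]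

theorem Htil_eq_kronecker : Htil h = 1 ⊗ₖ (Hgate ⊗ₖ 1) := of_middle_eq_kronecker Hgate

theorem Stil_eq_kronecker : Stil h = 1 ⊗ₖ (Sgate ⊗ₖ 1) := of_middle_eq_kronecker Sgate

theorem Ztil_eq_kronecker : Ztil h = 1 ⊗ₖ (Zgate ⊗ₖ 1) := of_middle_eq_kronecker Zgate

theorem UCS_mulVec (U : Matrix (Fin (2 ^ h)) (Fin (2 ^ h)) ℂ) (v : Ix h → ℂ) :
    UCS h U *ᵥ v = fun x => if x.2.1 = 0 then (U *ᵥ fun j => v (j, 0, x.2.2)) x.1 else v x := by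
  funext ⟨j, m, l⟩
  fin_cases m <;>
    simp [mulVec, dotProduct, UCS, Fintype.sum_prod_type, ite_and]

theorem UCS_one : UCS h 1 = 1 :=
  ext_iff_mulVec.2 fun v => by
    rw [UCS_mulVec, one_mulVec]
    funext ⟨j, m, l⟩
    fin_cases m <;> simp

theorem UCS_mul (U V : Matrix (Fin (2 ^ h)) (Fin (2 ^ h)) ℂ) :
    UCS h U * UCS h V = UCS h (U * V) :=
  ext_iff_mulVec.2 fun v => by
    simp only [← mulVec_mulVec, UCS_mulVec]
    funext x
    split_ifs <;> simp

theorem UCS_conjTranspose (U : Matrix (Fin (2 ^ h)) (Fin (2 ^ h)) ℂ) :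
    (UCS h U)ᴴ = UCS h Uᴴ := by
  ext ⟨j, m, l⟩ ⟨j', m', l'⟩
  fin_cases m <;> fin_cases m' <;> simp [UCS, apply_ite (starRingEnd ℂ), eq_comm]

theorem UCS_mem_unitary {U : Matrix (Fin (2 ^ h)) (Fin (2 ^ h)) ℂ}
    (hU : U ∈ unitary (Matrix (Fin (2 ^ h)) (Fin (2 ^ h)) ℂ)) :
    UCS h U ∈ unitary (Matrix (Ix h) (Ix h) ℂ) := by
  rw [mem_unitaryGroup_iff', star_eq_conjTranspose, UCS_conjTranspose, UCS_mul,
    ← star_eq_conjTranspose, hU.1, UCS_one]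

theorem UCopy_mulVec (v : Ix h → ℂ) :
    UCopy h *ᵥ v = fun x => if x.2.1 = 0 then v x else v (x.1 ^^^ x.2.2, 1, x.2.2) := by
  funext ⟨j, m, l⟩
  fin_cases m <;>
    simp [mulVec, dotProduct, UCopy, Fintype.sum_prod_type, ite_and, Fin.val_inj,
      val_eq_val_xor_iff]

theorem UCopy_mul_self : UCopy h * UCopy h = 1 :=
  ext_iff_mulVec.2 fun v => by
    simp only [← mulVec_mulVec, UCopy_mulVec, one_mulVec]
    funext ⟨j, m, l⟩
    fin_cases m <;> simp

theorem UCopy_conjTranspose : (UCopy h)ᴴ = UCopy h := by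
  ext ⟨j, m, l⟩ ⟨j', m', l'⟩
  by_cases hl : l = l' <;> fin_cases m <;> fin_cases m' <;>
    simp [UCopy, hl, eq_comm, val_eq_val_xor_iff, eq_xor_comm]

theorem UCopy_mem_unitary : UCopy h ∈ unitary (Matrix (Ix h) (Ix h) ℂ) := by
  rw [mem_unitaryGroup_iff', star_eq_conjTranspose, UCopy_conjTranspose, UCopy_mul_self]

theorem Wop_mem_unitary {U : Matrix (Fin (2 ^ h)) (Fin (2 ^ h)) ℂ}
    (hU : U ∈ unitary (Matrix (Fin (2 ^ h)) (Fin (2 ^ h)) ℂ)) (p : ℕ) :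
    Wop h U p ∈ unitary (Matrix (Ix h) (Ix h) ℂ) := by
  have hH : Htil h ∈ unitary (Matrix (Ix h) (Ix h) ℂ) := by
    rw [Htil_eq_kronecker]
    exact kronecker_mem_unitary (one_mem _) (kronecker_mem_unitary Hgate_mem_unitary (one_mem _))
  have hS : Stil h ∈ unitary (Matrix (Ix h) (Ix h) ℂ) := by
    rw [Stil_eq_kronecker]
    exact kronecker_mem_unitary (one_mem _) (kronecker_mem_unitary Sgate_mem_unitary (one_mem _))
  exact mul_mem (mul_mem (mul_mem (mul_mem hH (pow_mem hS p)) UCopy_mem_unitary)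
    (UCS_mem_unitary hU)) hH

theorem Ztil_isHermitian : (Ztil h).IsHermitian := by
  rw [Ztil_eq_kronecker, IsHermitian, conjTranspose_kronecker, conjTranspose_kronecker,
    conjTranspose_one, Zgate_isHermitian.eq]

theorem Rop_isHermitian : (Rop h).IsHermitian := by
  ext ⟨j, m, l⟩ ⟨j', m', l'⟩
  simp [Rop, apply_ite (starRingEnd ℂ), eq_comm, map_ofNat, and_comm, and_left_comm]

theorem Rop_mulVec (v : Ix h → ℂ) :
    Rop h *ᵥ v = fun x => v x - 2 * if x.1 = 0 ∧ x.2.1 = 0 then v (0, 0, x.2.2) else 0 := by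
  funext ⟨j, m, l⟩
  simp [mulVec, dotProduct, Rop, Fintype.sum_prod_type, ite_and, sub_mul, Finset.sum_sub_distrib]

variable (k : Fin (2 ^ h)) (f g : Fin (2 ^ h) → ℂ)

theorem eVec_eq_single : eVec h k = Pi.single (0, 0, k) 1 := by
  funext x
  simp [eVec, Pi.single_apply]

theorem Rop_mul_add_mul_Rop_mulVec_eVec (M : Matrix (Ix h) (Ix h) ℂ) :
    (Rop h * M + M * Rop h) *ᵥ eVec h k =
      fun x => -2 * if x.1 = 0 ∧ x.2.1 = 0 then (M *ᵥ eVec h k) (0, 0, x.2.2) else 0 := by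
  have hRe : Rop h *ᵥ eVec h k = -eVec h k := by
    rw [Rop_mulVec]
    funext ⟨j, m, l⟩
    by_cases hj : j = 0 <;> by_cases hm : m = 0 <;> by_cases hl : l = k <;>
      simp [eVec, hj, hm, hl]
    norm_num
  rw [add_mulVec, ← mulVec_mulVec, ← mulVec_mulVec, hRe, mulVec_neg, Rop_mulVec]
  funext x
  simp only [Pi.add_apply, Pi.neg_apply]
  ring

/-- `splitVec k f g` is the vector `f ⊗ e₀ ⊗ e_k + g ⊗ e₁ ⊗ e_k`. -/
def splitVec : Ix h → ℂ :=
  fun x => if x.2.2 = k then if x.2.1 = 0 then f x.1 else g x.1 else 0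

theorem eVec_eq_splitVec : eVec h k = splitVec k (Pi.single 0 1) 0 := by
  funext ⟨j, m, l⟩
  fin_cases m <;> by_cases hl : l = k <;> by_cases hj : j = 0 <;>
    simp [eVec, splitVec, Prod.ext_iff, hl, hj]

theorem Htil_mulVec_splitVec :
    Htil h *ᵥ splitVec k f g =
      splitVec k ((Real.sqrt 2 : ℂ)⁻¹ • (f + g)) ((Real.sqrt 2 : ℂ)⁻¹ • (f - g)) := by
  funext ⟨j, m, l⟩
  fin_cases m <;> by_cases hl : l = k <;>
    simp [mulVec, dotProduct, Htil, splitVec, Hgate, Fintype.sum_prod_type, ite_and, hl,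
      Finset.sum_add_distrib] <;> ring

theorem Stil_mulVec_splitVec : Stil h *ᵥ splitVec k f g = splitVec k f (Complex.I • g) := by
  funext ⟨j, m, l⟩
  fin_cases m <;> by_cases hl : l = k <;>
    simp [mulVec, dotProduct, Stil, splitVec, Sgate, Fintype.sum_prod_type, ite_and, hl]

theorem Stil_pow_mulVec_splitVec (p : ℕ) :
    Stil h ^ p *ᵥ splitVec k f g = splitVec k f (Complex.I ^ p • g) := by
  induction p generalizing g with
  | zero => simp
  | succ p ih =>
    rw [pow_succ', ← mulVec_mulVec, ih, Stil_mulVec_splitVec, smul_smul, pow_succ']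

theorem UCS_mulVec_splitVec (U : Matrix (Fin (2 ^ h)) (Fin (2 ^ h)) ℂ) :
    UCS h U *ᵥ splitVec k f g = splitVec k (U *ᵥ f) g := by
  rw [UCS_mulVec]
  funext ⟨j, m, l⟩
  fin_cases m <;> by_cases hl : l = k <;> simp [splitVec, hl, ← Pi.zero_def]

theorem UCopy_mulVec_splitVec :
    UCopy h *ᵥ splitVec k f g = splitVec k f (fun j => g (j ^^^ k)) := by
  rw [UCopy_mulVec]
  funext ⟨j, m, l⟩
  fin_cases m <;> by_cases hl : l = k <;> simp [splitVec, hl]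

theorem Ztil_mulVec_splitVec : Ztil h *ᵥ splitVec k f g = splitVec k f (-g) := by
  funext ⟨j, m, l⟩
  fin_cases m <;> by_cases hl : l = k <;>
    simp [mulVec, dotProduct, Ztil, splitVec, Zgate, Fintype.sum_prod_type, ite_and, hl]

theorem star_splitVec_dotProduct_splitVec (l : Fin (2 ^ h)) (f' g' : Fin (2 ^ h) → ℂ) :
    star (splitVec l f' g') ⬝ᵥ splitVec k f g =
      if l = k then star f' ⬝ᵥ f + star g' ⬝ᵥ g else 0 := by
  by_cases hl : l = k <;>
    simp [dotProduct, splitVec, Fintype.sum_prod_type, Finset.sum_add_distrib, hl, eq_comm]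

theorem Wop_mulVec_eVec (U : Matrix (Fin (2 ^ h)) (Fin (2 ^ h)) ℂ) (p : ℕ) :
    Wop h U p *ᵥ eVec h k =
      splitVec k ((2⁻¹ : ℂ) • (U.col 0 + Complex.I ^ p • Pi.single k 1))
        ((2⁻¹ : ℂ) • (U.col 0 - Complex.I ^ p • Pi.single k 1)) := by
  have hcopy :
      (fun j => ((Real.sqrt 2 : ℂ)⁻¹ • Pi.single 0 1 : Fin (2 ^ h) → ℂ) (j ^^^ k)) =
        (Real.sqrt 2 : ℂ)⁻¹ • Pi.single k 1 := by
    funext j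
    simp [Pi.single_apply]
  simp only [Wop, ← mulVec_mulVec, eVec_eq_splitVec, Htil_mulVec_splitVec, UCS_mulVec_splitVec,
    UCopy_mulVec_splitVec, Stil_pow_mulVec_splitVec, add_zero, sub_zero, mulVec_smul,
    mulVec_single_one, hcopy]
  congr 1 <;> funext j <;> simp only [Pi.smul_apply, Pi.add_apply, Pi.sub_apply, smul_eq_mul]
  · linear_combination
      (U.col 0 j + Complex.I ^ p * (Pi.single k 1 : Fin (2 ^ h) → ℂ) j) * inv_sqrt_two_mul_self
  · linear_combination
      (U.col 0 j - Complex.I ^ p * (Pi.single k 1 : Fin (2 ^ h) → ℂ) j) * inv_sqrt_two_mul_self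

theorem conjTranspose_Wop_mul_Ztil_mul_Wop_mulVec_eVec_apply
    (U : Matrix (Fin (2 ^ h)) (Fin (2 ^ h)) ℂ) (p : ℕ) (l : Fin (2 ^ h)) :
    (((Wop h U p)ᴴ * Ztil h * Wop h U p) *ᵥ eVec h k) (0, 0, l) =
      if l = k then (((-Complex.I) ^ p * U k 0).re : ℂ) else 0 := by
  rw [← mulVec_mulVec, ← mulVec_mulVec, conjTranspose_mulVec_apply, ← mulVec_single_one,
    ← eVec_eq_single, Wop_mulVec_eVec, Wop_mulVec_eVec, Ztil_mulVec_splitVec,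
    star_splitVec_dotProduct_splitVec]
  split_ifs with hlk
  · subst hlk
    rw [dotProduct_neg, ← sub_eq_add_neg, polarization_re_star_dotProduct]
    simp [star_smul, smul_dotProduct]
  · rfl

end

theorem eigensystem_of_block_encoding_general (h : ℕ)
    (U : Matrix (Fin (2 ^ h)) (Fin (2 ^ h)) ℂ)
    (hU₂ : Uᴴ * U = 1)
    (p : ℕ) (k : Fin (2 ^ h)) :
    ((-(1 / 2 : ℂ)) •
        ((Wop h U p)ᴴ * (Gop h U p + (Gop h U p)ᴴ) * Wop h U p)).mulVec
      (eVec h k) =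
    ((((-Complex.I) ^ p * U k 0).re : ℂ)) • eVec h k := by
  have hW : star (Wop h U p) * Wop h U p = 1 :=
    (Wop_mem_unitary (mem_unitaryGroup_iff'.2 hU₂) p).1
  have hanti := star_mul_add_star_mul_eq_anticomm hW Rop_isHermitian.isSelfAdjoint
    Ztil_isHermitian.isSelfAdjoint
  simp only [star_eq_conjTranspose] at hanti
  rw [Gop, hanti, smul_mulVec, Rop_mul_add_mul_Rop_mulVec_eVec]
  funext ⟨j, m, l⟩
  simp only [conjTranspose_Wop_mul_Ztil_mul_Wop_mulVec_eVec_apply, Pi.smul_apply, smul_eq_mul,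
    eVec, Prod.ext_iff]
  split_ifs <;> simp_all

/-- Lemma 5 of Rattew–Koczor. For a unitary `U_S` with first
column `ψ`, each `e₀ ⊗ e₀ ⊗ e_k` is an eigenvector of
`−(1/2)·W_p†(G_p + G_p†)W_p` with eigenvalue `Re((−i)^p ψ_k)`. -/
theorem eigensystem_of_block_encoding (h : ℕ) (hh : 1 ≤ h)
    (U : Matrix (Fin (2 ^ h)) (Fin (2 ^ h)) ℂ)
    (hU₁ : U * Uᴴ = 1) (hU₂ : Uᴴ * U = 1)
    (p : ℕ) (hp : p ≤ 1) (k : Fin (2 ^ h)) :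
    ((-(1 / 2 : ℂ)) •
        ((Wop h U p)ᴴ * (Gop h U p + (Gop h U p)ᴴ) * Wop h U p)).mulVec
      (eVec h k) =
    ((((-Complex.I) ^ p * U k 0).re : ℂ)) • eVec h k :=
  eigensystem_of_block_encoding_general h U hU₂ p k

end DiagBlockEncoding
end

section
/- Let m ≥ 1, N ≥ 1. For s ∈ {1, 2, 3, 4}, let V_s be a unitary on ℂ^{2^m} ⊗ ℂ^N with compression D_s := (⟨0|^{⊗m} ⊗ I_N)·V_s·(|0⟩^{⊗m} ⊗ I_N), and let γ = (γ₁, γ₂, γ₃, γ₄) = (1, 1, i, i). Let α₁, α₂, α₃, α₄ > 0 be real, set ‖α‖₁ = α₁+α₂+α₃+α₄, and let A be any 4×4 unitary with A·e₀ = ( √(α₁/‖α‖₁), √(α₂/‖α‖₁), √(α₃/‖α‖₁), √(α₄/‖α‖₁) )ᵀ. Define Sel = ∑_{s=1}^{4} |s⟩⟨s| ⊗ (γ_s·V_s) on ℂ⁴ ⊗ ℂ^{2^m} ⊗ ℂ^N, where |s⟩⟨s| projects onto the s-th standard basis vector of ℂ⁴. Then the compression of (A† ⊗ I)·Sel·(A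 ⊗ I) onto the joint zero state of the first two registers equals (1/‖α‖₁)·( α₁D₁ + α₂D₂ + i·α₃D₃ + i·α₄D₄ ); that is, (⟨e₀| ⊗ ⟨0|^{⊗m} ⊗ I_N)·(A† ⊗ I)·Sel·(A ⊗ I)·(|e₀⟩ ⊗ |0⟩^{⊗m} ⊗ I_N) = (1/‖α‖₁)∑_{s} γ_s α_s D_s. In particular, if D_s = diag(P_s(x₀), …, P_s(x_{N−1})) for real polynomials P_s and real points x_k, this operator is a (‖α‖₁, m+2, 0)-block-encoding of the diagonal matrix diag(f(x₀), …, f(x_{N−1})) with f = α₁P₁ + α₂P₂ + iα₃P₃ + iα₄P₄. -/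
/-!
Writing `Sel = ∑ₛ |s⟩⟨s| ⊗ γₛVₛ`, conjugation by `A ⊗ I` acts on the first tensor factor only:
`(A† ⊗ I) Sel (A ⊗ I) = ∑ₛ (A†|s⟩⟨s|A) ⊗ γₛVₛ`. The `⟨e₀|·|e₀⟩` entry of `A†|s⟩⟨s|A` is
`|A s 0|² = αₛ/‖α‖₁`, so the compression is `∑ₛ (αₛ/‖α‖₁) γₛ Dₛ`.
-/

namespace LCUPoly

open Matrix

noncomputable def γvec : Fin 4 → ℂ := ![1, 1, Complex.I, Complex.I]

def tensId (m N : ℕ) (A : Matrix (Fin 4) (Fin 4) ℂ) :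
    Matrix (Fin 4 × Fin (2 ^ m) × Fin N) (Fin 4 × Fin (2 ^ m) × Fin N) ℂ :=
  Matrix.of fun x y => if x.2 = y.2 then A x.1 y.1 else 0

noncomputable def Sel (m N : ℕ)
    (V : Fin 4 → Matrix (Fin (2 ^ m) × Fin N) (Fin (2 ^ m) × Fin N) ℂ) :
    Matrix (Fin 4 × Fin (2 ^ m) × Fin N) (Fin 4 × Fin (2 ^ m) × Fin N) ℂ :=
  Matrix.of fun x y => if x.1 = y.1 then γvec x.1 * V x.1 x.2 y.2 else 0

open scoped Kronecker

section Kronecker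

variable {ι κ R : Type*} [Fintype ι]

theorem kronecker_one_mul_sum_kronecker_mul_kronecker_one [Fintype κ] [DecidableEq κ]
    [CommSemiring R] (B C : Matrix ι ι R) (P : ι → Matrix ι ι R) (W : ι → Matrix κ κ R) :
    (B ⊗ₖ (1 : Matrix κ κ R)) * (∑ s, P s ⊗ₖ W s) * (C ⊗ₖ (1 : Matrix κ κ R)) =
      ∑ s, (B * P s * C) ⊗ₖ W s := by
  simp only [Finset.mul_sum, Finset.sum_mul, ← mul_kronecker_mul, one_mul, mul_one]

theorem conjTranspose_mul_single_mul_apply [DecidableEq ι] [Semiring R] [StarRing R]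
    (A : Matrix ι ι R) (s i j : ι) :
    (Aᴴ * single s s (1 : R) * A) i j = star (A s i) * A s j := by
  simp [Matrix.mul_apply, single_apply, ite_and, eq_comm (a := s)]

theorem sum_single_kronecker_apply [DecidableEq ι] [Semiring R] (W : ι → Matrix κ κ R)
    (s t : ι) (x y : κ) :
    (∑ r, single r r (1 : R) ⊗ₖ W r) (s, x) (t, y) = if s = t then W s x y else 0 := by
  simp [Matrix.sum_apply, single_apply, ite_and]

end Kronecker

theorem tensId_eq_kronecker (m N : ℕ) (A : Matrix (Fin 4) (Fin 4) ℂ) :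
    tensId m N A = A ⊗ₖ (1 : Matrix (Fin (2 ^ m) × Fin N) (Fin (2 ^ m) × Fin N) ℂ) := by
  ext x y
  simp [tensId, one_apply]

theorem Sel_eq_sum_single_kronecker (m N : ℕ)
    (V : Fin 4 → Matrix (Fin (2 ^ m) × Fin N) (Fin (2 ^ m) × Fin N) ℂ) :
    Sel m N V = ∑ s, single s s 1 ⊗ₖ (γvec s • V s) := by
  ext x y
  rw [sum_single_kronecker_apply]
  simp [Sel]

theorem star_ofReal_sqrt_mul_self {x : ℝ} (hx : 0 ≤ x) :
    star (Real.sqrt x : ℂ) * Real.sqrt x = x := by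
  rw [Complex.star_def, Complex.conj_ofReal, ← Complex.ofReal_mul, Real.mul_self_sqrt hx]

theorem lcu_four_polynomials_general (m N : ℕ)
    (V : Fin 4 → Matrix (Fin (2 ^ m) × Fin N) (Fin (2 ^ m) × Fin N) ℂ)
    (D : Fin 4 → Matrix (Fin N) (Fin N) ℂ)
    (hD : ∀ s, ∀ j k : Fin N,
      D s j k = V s ((0 : Fin (2 ^ m)), j) ((0 : Fin (2 ^ m)), k))
    (α : Fin 4 → ℝ) (hα : ∀ s, 0 < α s)
    (A : Matrix (Fin 4) (Fin 4) ℂ)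
    (hcol : ∀ s : Fin 4, A s 0 = (Real.sqrt (α s / (∑ t, α t)) : ℂ)) :
    ∀ j k : Fin N,
      (tensId m N Aᴴ * Sel m N V * tensId m N A)
          ((0 : Fin 4), ((0 : Fin (2 ^ m)), j)) ((0 : Fin 4), ((0 : Fin (2 ^ m)), k)) =
        ((∑ t, α t : ℝ) : ℂ)⁻¹ * ∑ s : Fin 4, γvec s * (α s : ℂ) * D s j k := by
  intro j k
  have hweight : ∀ s, star (A s 0) * A s 0 = ((α s / ∑ t, α t : ℝ) : ℂ) := fun s => by
    rw [hcol s, star_ofReal_sqrt_mul_self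
      (div_nonneg (hα s).le (Finset.sum_nonneg fun t _ => (hα t).le))]
  rw [tensId_eq_kronecker, tensId_eq_kronecker, Sel_eq_sum_single_kronecker,
    kronecker_one_mul_sum_kronecker_mul_kronecker_one, Matrix.sum_apply, Finset.mul_sum]
  refine Finset.sum_congr rfl fun s _ => ?_
  rw [kronecker_apply, conjTranspose_mul_single_mul_apply, hweight, Matrix.smul_apply, hD,
    smul_eq_mul]
  push_cast
  ring

/-- linear combination of four block-encoded polynomials.
If `V_s` are unitaries with compressions `D_s`, `α_s > 0`, and `A` is any `4×4`
unitary whose first column is `(√(α_s/‖α‖₁))_s`, then the compression of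
`(A† ⊗ I)·Sel·(A ⊗ I)` onto the joint zero state of the first two registers is
`(1/‖α‖₁)·(α₁D₁ + α₂D₂ + i·α₃D₃ + i·α₄D₄)`. -/
theorem lcu_four_polynomials (m N : ℕ) (hm : 1 ≤ m) (hN : 1 ≤ N)
    (V : Fin 4 → Matrix (Fin (2 ^ m) × Fin N) (Fin (2 ^ m) × Fin N) ℂ)
    (hV : ∀ s, V s * (V s)ᴴ = 1 ∧ (V s)ᴴ * V s = 1)
    (D : Fin 4 → Matrix (Fin N) (Fin N) ℂ)
    (hD : ∀ s, ∀ j k : Fin N,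
      D s j k = V s ((0 : Fin (2 ^ m)), j) ((0 : Fin (2 ^ m)), k))
    (α : Fin 4 → ℝ) (hα : ∀ s, 0 < α s)
    (A : Matrix (Fin 4) (Fin 4) ℂ)
    (hA₁ : A * Aᴴ = 1) (hA₂ : Aᴴ * A = 1)
    (hcol : ∀ s : Fin 4, A s 0 = (Real.sqrt (α s / (∑ t, α t)) : ℂ)) :
    ∀ j k : Fin N,
      (tensId m N Aᴴ * Sel m N V * tensId m N A)
          ((0 : Fin 4), ((0 : Fin (2 ^ m)), j)) ((0 : Fin 4), ((0 : Fin (2 ^ m)), k)) =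
        ((∑ t, α t : ℝ) : ℂ)⁻¹ * ∑ s : Fin 4, γvec s * (α s : ℂ) * D s j k :=
  lcu_four_polynomials_general m N V D hD α hα A hcol

end LCUPoly
end

section
/- Let m ≥ 1, N ≥ 1, t ≥ 1, and G = 2^t. Let g : {0, …, N−1} → {0, …, G−1} be any function (assigning to each index k the piece it belongs to). For each j ∈ {0, …, G−1}, let V_j be a unitary on ℂ^{2^m} ⊗ ℂ^N whose compression is a diagonal matrix: (⟨0|^{⊗m} ⊗ I_N)·V_j·(|0⟩^{⊗m} ⊗ I_N) = diag(d_{j,0}, …, d_{j,N−1}) with d_{j,k} ∈ ℂ. Define on ℂ^G ⊗ ℂ^{2^m} ⊗ ℂ^N the permutation unitary Pg by Pg(e_a ⊗ y ⊗ e_k) = e_{a ⊕ g(k)} ⊗ y ⊗ e_k, where ⊕ is bitwise XOR of t-bit strings, and the select unitary Sel = ∑_{j=0}^{G−1} |j⟩⟨j| ⊗ V_j. Then the compression of Pg† · Sel · Pg onto the joint zero state of the first two registers is diag(d_{g(0),0}, d_{g(1),1}, …, d_{g(N−1),N−1}); that is, (⟨0|_G ⊗ ⟨0|^{⊗m} ⊗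 I_N)·Pg†·Sel·Pg·(|0⟩_G ⊗ |0⟩^{⊗m} ⊗ I_N) = diag over k of d_{g(k),k}. In particular, if d_{j,k} = f_j(x_k) for functions f_j and points x_k, this yields a block-encoding of the diagonal matrix of the piece-wise function k ↦ f_{g(k)}(x_k). -/
/-! `Pg` sends `|0⟩|0⟩|k⟩` to the basis vector `|g(k)⟩|0⟩|k⟩`, so the compression of
`Pg† · Sel · Pg` at `(x, y)` is the entry of `Sel` between `|g(x)⟩|0⟩|x⟩` and `|g(y)⟩|0⟩|y⟩`,
namely `V_{g(x)}`'s diagonal compression entry `d_{g(x),x}` when `x = y` and `0` otherwise. -/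

namespace PieceWise

open Matrix

/-- The select operator `Sel = ∑_{j=0}^{G−1} |j⟩⟨j| ⊗ V_j` on
`ℂ^G ⊗ ℂ^{2^m} ⊗ ℂ^N`. -/
def Sel (G m N : ℕ)
    (V : Fin G → Matrix (Fin (2 ^ m) × Fin N) (Fin (2 ^ m) × Fin N) ℂ) :
    Matrix (Fin G × Fin (2 ^ m) × Fin N) (Fin G × Fin (2 ^ m) × Fin N) ℂ :=
  Matrix.of fun x y => if x.1 = y.1 then V x.1 x.2 y.2 else 0

/-- The permutation unitary `Pg(e_a ⊗ y ⊗ e_k) = e_{a ⊕ g(k)} ⊗ y ⊗ e_k`,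
`⊕` being the bitwise XOR of `t`-bit strings (`G = 2^t`). -/
def Pg (t m N : ℕ) (g : Fin N → Fin (2 ^ t)) :
    Matrix (Fin (2 ^ t) × Fin (2 ^ m) × Fin N)
      (Fin (2 ^ t) × Fin (2 ^ m) × Fin N) ℂ :=
  Matrix.of fun x y =>
    if x.2.1 = y.2.1 ∧ x.2.2 = y.2.2 ∧
        (x.1 : ℕ) = (y.1 : ℕ) ^^^ ((g y.2.2 : ℕ))
    then 1 else 0

theorem conjTranspose_mul_mul_apply_of_basis_columns {ι κ α : Type*} [Fintype ι]
    [DecidableEq ι] [Semiring α] [StarRing α] {A B : Matrix ι κ α} (M : Matrix ι ι α)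
    {i j : κ} {p q : ι} (hA : ∀ r, A r j = if r = p then 1 else 0)
    (hB : ∀ r, B r i = if r = q then 1 else 0) :
    (Bᴴ * M * A) i j = M q p := by
  simp [Matrix.mul_apply, hA, hB, Matrix.conjTranspose_apply, apply_ite star]

theorem Pg_apply_zero_fst (t m N : ℕ) (g : Fin N → Fin (2 ^ t))
    (q : Fin (2 ^ t) × Fin (2 ^ m) × Fin N) (y : Fin (2 ^ m)) (z : Fin N) :
    Pg t m N g q (0, y, z) = if q = (g z, y, z) then 1 else 0 := by
  obtain ⟨a, b, c⟩ := q
  simp only [Pg, Matrix.of_apply, Fin.val_zero, Nat.zero_xor, Prod.mk.injEq, Fin.val_inj]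
  congr 1
  exact propext ⟨fun ⟨hb, hc, ha⟩ => ⟨ha, hb, hc⟩, fun ⟨ha, hb, hc⟩ => ⟨hb, hc, ha⟩⟩

theorem piecewise_block_encoding_general (m N t : ℕ) (g : Fin N → Fin (2 ^ t))
    (V : Fin (2 ^ t) → Matrix (Fin (2 ^ m) × Fin N) (Fin (2 ^ m) × Fin N) ℂ)
    (d : Fin (2 ^ t) → Fin N → ℂ)
    (hd : ∀ j, ∀ x y : Fin N,
      V j ((0 : Fin (2 ^ m)), x) ((0 : Fin (2 ^ m)), y) =
        if x = y then d j x else 0) :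
    ∀ x y : Fin N,
      ((Pg t m N g)ᴴ * Sel (2 ^ t) m N V * Pg t m N g)
          ((0 : Fin (2 ^ t)), ((0 : Fin (2 ^ m)), x))
          ((0 : Fin (2 ^ t)), ((0 : Fin (2 ^ m)), y)) =
        if x = y then d (g x) x else 0 := by
  intro x y
  rw [conjTranspose_mul_mul_apply_of_basis_columns _ (Pg_apply_zero_fst t m N g · 0 y)
    (Pg_apply_zero_fst t m N g · 0 x)]
  simp only [Sel, Matrix.of_apply, hd]
  by_cases hxy : x = y <;> simp [hxy]

/-- block-encoding of a piece-wise function. If each `V_j`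
block-encodes a diagonal matrix `diag(d_{j,0}, …, d_{j,N−1})`, then
`Pg† · Sel · Pg` block-encodes the diagonal matrix whose `k`-th entry is
`d_{g(k),k}`, i.e. the piece-wise function `k ↦ f_{g(k)}(x_k)`. -/
theorem piecewise_block_encoding (m N t : ℕ) (hm : 1 ≤ m) (hN : 1 ≤ N)
    (ht : 1 ≤ t) (g : Fin N → Fin (2 ^ t))
    (V : Fin (2 ^ t) → Matrix (Fin (2 ^ m) × Fin N) (Fin (2 ^ m) × Fin N) ℂ)
    (hV : ∀ j, V j * (V j)ᴴ = 1 ∧ (V j)ᴴ * V j = 1)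
    (d : Fin (2 ^ t) → Fin N → ℂ)
    (hd : ∀ j, ∀ x y : Fin N,
      V j ((0 : Fin (2 ^ m)), x) ((0 : Fin (2 ^ m)), y) =
        if x = y then d j x else 0) :
    ∀ x y : Fin N,
      ((Pg t m N g)ᴴ * Sel (2 ^ t) m N V * Pg t m N g)
          ((0 : Fin (2 ^ t)), ((0 : Fin (2 ^ m)), x))
          ((0 : Fin (2 ^ t)), ((0 : Fin (2 ^ m)), y)) =
        if x = y then d (g x) x else 0 :=
  piecewise_block_encoding_general m N t g V d hd

end PieceWise
end
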